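/- arXiv:1701.02045 — 2 statements merged into one kernel-verified Lean document; each statement's English description precedes it below -/
import Mathlib

section
/- For every θ ∈ ℝ^{n+m} and every v ∈ ℝⁿ with strictly positive entries, set V_L := diag(V_L*) v and V_i := (V_L)_i for load buses, V_i := (V_G)_{i−n} for generator buses. Then for every load bus i ≤ n: −Σ_{j=1}^{n+m} V_i V_j B_{ij} cos(θ_i − θ_j) = −4 (diag(v) S (v − 1_n))_i + (|A|_L D diag(h(v)) (1_{|E|} − cos(Aᵀθ)))_i, where cos is applied entrywise to the branch angle-difference vector Aᵀθ ∈ ℝ^{|E|}. Consequently, (θ, V_L) solves the reactive power flow equations Q_i = −Σ_j V_iV_jB_{ij} cos(θ_i − θ_j) at all load buses if and only if Q_L = −4 diag(v) S (v − 1_n) + |A|_L D diag(h(v)) (1_{|E|} − cos(Aᵀθ)). -/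
open Matrix BigOperators

noncomputable section

/-- Buses `a` and `b` are joined by a branch. -/
def busJoined {n m E : ℕ} (src tgt : Fin E → Fin n ⊕ Fin m)
    (a b : Fin n ⊕ Fin m) : Prop :=
  ∃ e : Fin E, (src e = a ∧ tgt e = b) ∨ (src e = b ∧ tgt e = a)

/-- The load–load block of the susceptance matrix. -/
def BLL {n m : ℕ} (B : Matrix (Fin n ⊕ Fin m) (Fin n ⊕ Fin m) ℝ) :
    Matrix (Fin n) (Fin n) ℝ :=
  Matrix.of fun i j => B (Sum.inl i) (Sum.inl j)

/-- The load–generator block of the susceptance matrix. -/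
def BLG {n m : ℕ} (B : Matrix (Fin n ⊕ Fin m) (Fin n ⊕ Fin m) ℝ) :
    Matrix (Fin n) (Fin m) ℝ :=
  Matrix.of fun i j => B (Sum.inl i) (Sum.inr j)

/-- Open-circuit load voltages  V_L* = −B_LL⁻¹ B_LG V_G. -/
def VLstar {n m : ℕ} (B : Matrix (Fin n ⊕ Fin m) (Fin n ⊕ Fin m) ℝ)
    (VG : Fin m → ℝ) : Fin n → ℝ :=
  -((BLL B)⁻¹.mulVec ((BLG B).mulVec VG))

/-- Open-circuit voltage profile on all buses: V_L* on loads, V_G on generators. -/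
def Vstar {n m : ℕ} (B : Matrix (Fin n ⊕ Fin m) (Fin n ⊕ Fin m) ℝ)
    (VG : Fin m → ℝ) : Fin n ⊕ Fin m → ℝ :=
  Sum.elim (VLstar B VG) VG

/-- Oriented node–edge incidence matrix: +1 at the source, −1 at the target. -/
def incA {n m E : ℕ} (src tgt : Fin E → Fin n ⊕ Fin m) :
    Matrix (Fin n ⊕ Fin m) (Fin E) ℝ :=
  Matrix.of fun a e => if src e = a then 1 else if tgt e = a then -1 else 0

/-- Load-bus rows of the unsigned incidence matrix |A|_L. -/
def absAL {n m E : ℕ} (src tgt : Fin E → Fin n ⊕ Fin m) :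
    Matrix (Fin n) (Fin E) ℝ :=
  Matrix.of fun i e => |incA src tgt (Sum.inl i) e|

/-- Branch stiffness matrix D = diag(V*_{s(e)} V*_{t(e)} B_{s(e)t(e)}). -/
def Dmat {n m E : ℕ} (B : Matrix (Fin n ⊕ Fin m) (Fin n ⊕ Fin m) ℝ)
    (VG : Fin m → ℝ) (src tgt : Fin E → Fin n ⊕ Fin m) :
    Matrix (Fin E) (Fin E) ℝ :=
  Matrix.diagonal fun e => Vstar B VG (src e) * Vstar B VG (tgt e) * B (src e) (tgt e)

/-- Nodal stiffness matrix S = ¼ diag(V_L*) B_LL diag(V_L*). -/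
def Smat {n m : ℕ} (B : Matrix (Fin n ⊕ Fin m) (Fin n ⊕ Fin m) ℝ)
    (VG : Fin m → ℝ) : Matrix (Fin n) (Fin n) ℝ :=
  (4⁻¹ : ℝ) • (Matrix.diagonal (VLstar B VG) * BLL B * Matrix.diagonal (VLstar B VG))

/-- The edge nonlinearity h(v): v_s v_t on load–load branches, v_t on
generator–load branches, and 1 on generator–generator branches. -/
def hvec {n m E : ℕ} (src tgt : Fin E → Fin n ⊕ Fin m) (v : Fin n → ℝ) :
    Fin E → ℝ := fun e =>
  match src e, tgt e with
  | Sum.inl i, Sum.inl j => v i * v j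
  | Sum.inr _, Sum.inl j => v j
  | Sum.inl i, Sum.inr _ => v i
  | Sum.inr _, Sum.inr _ => 1

/-- Branch active power flows p = (AᵀA)⁻¹AᵀP for a radial network. -/
def pflow {n m E : ℕ} (src tgt : Fin E → Fin n ⊕ Fin m)
    (P : Fin n ⊕ Fin m → ℝ) : Fin E → ℝ :=
  (((incA src tgt)ᵀ * incA src tgt)⁻¹ * (incA src tgt)ᵀ).mulVec P

/-- ψ(v) = diag(h(v))⁻¹ D⁻¹ p. -/
def psif {n m E : ℕ} (B : Matrix (Fin n ⊕ Fin m) (Fin n ⊕ Fin m) ℝ)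
    (VG : Fin m → ℝ) (src tgt : Fin E → Fin n ⊕ Fin m)
    (P : Fin n ⊕ Fin m → ℝ) (v : Fin n → ℝ) : Fin E → ℝ :=
  ((Matrix.diagonal (hvec src tgt v))⁻¹ * (Dmat B VG src tgt)⁻¹).mulVec (pflow src tgt P)

/-- u(v)_e = 1 − √(1 − ψ(v)_e²). -/
def uvec {n m E : ℕ} (B : Matrix (Fin n ⊕ Fin m) (Fin n ⊕ Fin m) ℝ)
    (VG : Fin m → ℝ) (src tgt : Fin E → Fin n ⊕ Fin m)
    (P : Fin n ⊕ Fin m → ℝ) (v : Fin n → ℝ) : Fin E → ℝ :=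
  fun e => 1 - Real.sqrt (1 - (psif B VG src tgt P v e) ^ 2)

/-- The fixed-point power flow map
f(v) = 1 − ¼S⁻¹ diag(Q_L) diag(v)⁻¹ 1 + ¼S⁻¹ diag(v)⁻¹ |A|_L D diag(h(v)) u(v). -/
def fppf {n m E : ℕ} (B : Matrix (Fin n ⊕ Fin m) (Fin n ⊕ Fin m) ℝ)
    (VG : Fin m → ℝ) (src tgt : Fin E → Fin n ⊕ Fin m)
    (P : Fin n ⊕ Fin m → ℝ) (QL : Fin n → ℝ) (v : Fin n → ℝ) : Fin n → ℝ :=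
  (fun _ => (1 : ℝ))
    - (4⁻¹ : ℝ) •
      (((Smat B VG)⁻¹ * Matrix.diagonal QL * (Matrix.diagonal v)⁻¹).mulVec fun _ => (1 : ℝ))
    + (4⁻¹ : ℝ) •
      (((Smat B VG)⁻¹ * (Matrix.diagonal v)⁻¹ * absAL src tgt * Dmat B VG src tgt *
          Matrix.diagonal (hvec src tgt v)).mulVec (uvec B VG src tgt P v))

end

/-! The constant part of the reactive injection at load bus `i` vanishes at the open-circuit
voltages: `B_LL V_L* + B_LG V_G = 0`. Writing `V_L = diag(V_L*) v` therefore leaves only the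
deviation `v - 1` in it, which is the `S`-term. The angle-dependent part
`∑_b V_i V_b B_ib (1 - cos(θ_i - θ_b))` vanishes off the branches at `i`, and on the branch `e`
its summand is `D_e h(v)_e (1 - cos((Aᵀθ)_e))`, since `V_a = V*_a σ_a` with `σ = (v, 1)` and
`h(v)_e = σ_{s(e)} σ_{t(e)}`. -/

section IncidentEdges

variable {V ι M : Type*} [Fintype V] [DecidableEq V] [Fintype ι] [AddCommMonoid M]

theorem sum_incident_edges_eq_sum (src tgt : ι → V)
    (huniq : ∀ e f : ι,
      ((src e = src f ∧ tgt e = tgt f) ∨ (src e = tgt f ∧ tgt e = src f)) → e = f)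
    (a : V) (g : V → M)
    (hg : ∀ b, (∀ e, ¬((src e = a ∧ tgt e = b) ∨ (src e = b ∧ tgt e = a))) → g b = 0) :
    ∑ e ∈ Finset.univ.filter (fun e => src e = a ∨ tgt e = a),
        g (if src e = a then tgt e else src e) = ∑ b, g b := by
  refine Finset.sum_of_injOn (fun e => if src e = a then tgt e else src e) ?_
    (fun _ _ => Finset.mem_coe.mpr (Finset.mem_univ _)) ?_ (fun _ _ => rfl)
  · intro e he f hf hef
    simp only [Finset.coe_filter, Finset.mem_univ, true_and, Set.mem_ofPred_eq] at he hf
    apply huniq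
    simp only at hef
    split_ifs at hef with hse hsf hsf
    · exact Or.inl ⟨hse.trans hsf.symm, hef⟩
    · exact Or.inr ⟨hse.trans (hf.resolve_left hsf).symm, hef⟩
    · exact Or.inr ⟨hef, (he.resolve_left hse).trans hsf.symm⟩
    · exact Or.inl ⟨hef, (he.resolve_left hse).trans (hf.resolve_left hsf).symm⟩
  · intro b _ hb
    refine hg b fun e he => hb ⟨e, ?_, ?_⟩
    · simp only [Finset.coe_filter, Finset.mem_univ, true_and, Set.mem_ofPred_eq]
      tauto
    · show (if src e = a then tgt e else src e) = b
      rcases he with ⟨hs, ht⟩ | ⟨hs, ht⟩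
      · rw [if_pos hs, ht]
      · split_ifs with hsa
        · rw [ht, ← hsa, hs]
        · exact hs

end IncidentEdges

section PowerNetwork

variable {n m E : ℕ} {src tgt : Fin E → Fin n ⊕ Fin m}

theorem incA_transpose_mulVec (hne : ∀ e, src e ≠ tgt e) (θ : Fin n ⊕ Fin m → ℝ) (e : Fin E) :
    (incA src tgt)ᵀ.mulVec θ e = θ (src e) - θ (tgt e) := by
  have hcol : ∀ a, (incA src tgt)ᵀ e a * θ a =
      (if src e = a then θ a else 0) - (if tgt e = a then θ a else 0) := by
    intro a
    simp only [transpose_apply, incA, of_apply]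
    by_cases hs : src e = a
    · have ht : tgt e ≠ a := fun ht => hne e (hs.trans ht.symm)
      simp [hs, ht]
    · by_cases ht : tgt e = a <;> simp [hs, ht]
  simp only [mulVec, dotProduct, hcol, Finset.sum_sub_distrib, Finset.sum_ite_eq,
    Finset.mem_univ, if_true]

theorem absAL_apply (i : Fin n) (e : Fin E) :
    absAL src tgt i e = if src e = Sum.inl i ∨ tgt e = Sum.inl i then 1 else 0 := by
  by_cases hs : src e = Sum.inl i
  · simp [absAL, incA, hs]
  · by_cases ht : tgt e = Sum.inl i <;> simp [absAL, incA, hs, ht]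

theorem hvec_eq_mul (v : Fin n → ℝ) (e : Fin E) :
    hvec src tgt v e = Sum.elim v 1 (src e) * Sum.elim v 1 (tgt e) := by
  unfold hvec
  rcases src e with _ | _ <;> rcases tgt e with _ | _ <;> simp

variable (B : Matrix (Fin n ⊕ Fin m) (Fin n ⊕ Fin m) ℝ) (VG : Fin m → ℝ)

theorem Vstar_mul_elim (v : Fin n → ℝ) (a : Fin n ⊕ Fin m) :
    Vstar B VG a * Sum.elim v 1 a = Sum.elim (fun k => VLstar B VG k * v k) VG a := by
  rcases a with _ | _ <;> simp [Vstar]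

theorem BLL_mulVec_VLstar (hB : IsUnit (BLL B)) :
    (BLL B).mulVec (VLstar B VG) = -((BLG B).mulVec VG) := by
  rw [VLstar, mulVec_neg, mulVec_mulVec,
    mul_nonsing_inv _ ((isUnit_iff_isUnit_det _).mp hB), one_mulVec]

theorem sum_load_row_eq_Smat (hB : IsUnit (BLL B)) (v : Fin n → ℝ) (i : Fin n) :
    ∑ b, Sum.elim (fun k => VLstar B VG k * v k) VG (Sum.inl i)
        * Sum.elim (fun k => VLstar B VG k * v k) VG b * B (Sum.inl i) b
      = 4 * ((diagonal v * Smat B VG).mulVec (v - fun _ => 1)) i := by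
  have hbalance : ∑ j, B (Sum.inl i) (Sum.inl j) * VLstar B VG j
      = -∑ g, B (Sum.inl i) (Sum.inr g) * VG g := by
    simpa [mulVec, dotProduct, BLL, BLG] using congrFun (BLL_mulVec_VLstar B VG hB) i
  simp only [Fintype.sum_sum_type, Sum.elim_inl, Sum.elim_inr, mulVec, dotProduct,
    diagonal_mul, Smat, Matrix.smul_apply, mul_diagonal, BLL, of_apply, Pi.sub_apply,
    smul_eq_mul, Finset.mul_sum]
  have hgen : ∑ g, VLstar B VG i * v i * VG g * B (Sum.inl i) (Sum.inr g)
      = -(VLstar B VG i * v i) * ∑ j, B (Sum.inl i) (Sum.inl j) * VLstar B VG j := by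
    rw [hbalance, neg_mul_neg, Finset.mul_sum]
    exact Finset.sum_congr rfl fun g _ => by ring
  rw [hgen, Finset.mul_sum, ← Finset.sum_add_distrib]
  exact Finset.sum_congr rfl fun j _ => by ring

theorem absAL_Dmat_hvec_mulVec_eq_sum (hsym : Bᵀ = B) (hne : ∀ e, src e ≠ tgt e)
    (huniq : ∀ e f : Fin E,
      ((src e = src f ∧ tgt e = tgt f) ∨ (src e = tgt f ∧ tgt e = src f)) → e = f)
    (hBzero : ∀ a b, a ≠ b → ¬ busJoined src tgt a b → B a b = 0)
    (θ : Fin n ⊕ Fin m → ℝ) (v : Fin n → ℝ) (i : Fin n) :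
    ((absAL src tgt * Dmat B VG src tgt * diagonal (hvec src tgt v)).mulVec
        (fun e => 1 - Real.cos ((incA src tgt)ᵀ.mulVec θ e))) i
      = ∑ b, Sum.elim (fun k => VLstar B VG k * v k) VG (Sum.inl i)
          * Sum.elim (fun k => VLstar B VG k * v k) VG b * B (Sum.inl i) b
          * (1 - Real.cos (θ (Sum.inl i) - θ b)) := by
  set W := Sum.elim (fun k => VLstar B VG k * v k) VG with hW
  set branch : Fin n ⊕ Fin m → Fin n ⊕ Fin m → ℝ :=
    fun a b => W a * W b * B a b * (1 - Real.cos (θ a - θ b)) with hbranch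
  have hbranch_symm : ∀ a b, branch a b = branch b a := by
    intro a b
    have hB : B a b = B b a := by simpa using congrFun (congrFun hsym b) a
    simp only [hbranch, hB, ← Real.cos_neg (θ a - θ b), neg_sub]
    ring
  have hentry : ∀ e, (absAL src tgt * Dmat B VG src tgt * diagonal (hvec src tgt v)) i e
      * (1 - Real.cos ((incA src tgt)ᵀ.mulVec θ e))
      = if src e = Sum.inl i ∨ tgt e = Sum.inl i then branch (src e) (tgt e) else 0 := by
    intro e
    rw [Dmat, mul_diagonal, mul_diagonal, absAL_apply, incA_transpose_mulVec hne,
      hvec_eq_mul]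
    split_ifs
    · simp only [hbranch, hW, ← Vstar_mul_elim B VG v]
      ring
    · ring
  rw [mulVec, dotProduct]
  simp only [hentry, ← Finset.sum_filter]
  rw [← sum_incident_edges_eq_sum src tgt huniq (Sum.inl i) (branch (Sum.inl i))]
  · refine Finset.sum_congr rfl fun e he => ?_
    split_ifs with hs
    · rw [hs]
    · rw [(Finset.mem_filter.mp he).2.resolve_left hs, hbranch_symm]
  · intro b hb
    by_cases hbi : b = Sum.inl i
    · simp [hbranch, hbi]
    · simp only [hbranch, hBzero _ _ (Ne.symm hbi) fun ⟨e, he⟩ => hb e he, mul_zero, zero_mul]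

theorem reactive_injection_load_eq (hsym : Bᵀ = B) (hne : ∀ e, src e ≠ tgt e)
    (huniq : ∀ e f : Fin E,
      ((src e = src f ∧ tgt e = tgt f) ∨ (src e = tgt f ∧ tgt e = src f)) → e = f)
    (hBzero : ∀ a b, a ≠ b → ¬ busJoined src tgt a b → B a b = 0) (hB : IsUnit (BLL B))
    (θ : Fin n ⊕ Fin m → ℝ) (v : Fin n → ℝ) (i : Fin n) :
    -(∑ b, Sum.elim (fun k => VLstar B VG k * v k) VG (Sum.inl i)
          * Sum.elim (fun k => VLstar B VG k * v k) VG b * B (Sum.inl i) b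
          * Real.cos (θ (Sum.inl i) - θ b))
      = -4 * ((diagonal v * Smat B VG).mulVec (v - fun _ => 1)) i
        + ((absAL src tgt * Dmat B VG src tgt * diagonal (hvec src tgt v)).mulVec
            (fun e => 1 - Real.cos ((incA src tgt)ᵀ.mulVec θ e))) i := by
  rw [absAL_Dmat_hvec_mulVec_eq_sum B VG hsym hne huniq hBzero, neg_mul, ← sum_load_row_eq_Smat B VG hB,
    ← Finset.sum_neg_distrib, ← Finset.sum_neg_distrib, ← Finset.sum_add_distrib]
  exact Finset.sum_congr rfl fun b _ => by ring

end PowerNetwork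

theorem stmt13_general {n m E : ℕ}
    (B : Matrix (Fin n ⊕ Fin m) (Fin n ⊕ Fin m) ℝ)
    (VG : Fin m → ℝ)
    (src tgt : Fin E → Fin n ⊕ Fin m)
    (hsym : Bᵀ = B)
    (hne : ∀ e : Fin E, src e ≠ tgt e)
    (huniq : ∀ e f : Fin E,
      ((src e = src f ∧ tgt e = tgt f) ∨ (src e = tgt f ∧ tgt e = src f)) → e = f)
    (hBzero : ∀ a b : Fin n ⊕ Fin m, a ≠ b → ¬ busJoined src tgt a b → B a b = 0)
    (hBLL : (-(BLL B)).PosDef) :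
    ∀ (θ : Fin n ⊕ Fin m → ℝ) (v : Fin n → ℝ), (∀ i, 0 < v i) →
      ∀ V : Fin n ⊕ Fin m → ℝ,
        V = Sum.elim (fun k => VLstar B VG k * v k) VG →
        ((∀ i : Fin n,
            -(∑ b : Fin n ⊕ Fin m,
                V (Sum.inl i) * V b * B (Sum.inl i) b * Real.cos (θ (Sum.inl i) - θ b))
              = -4 * ((Matrix.diagonal v * Smat B VG).mulVec (v - fun _ => 1)) i
                + ((absAL src tgt * Dmat B VG src tgt * Matrix.diagonal (hvec src tgt v)).mulVec
                    (fun e => 1 - Real.cos ((incA src tgt)ᵀ.mulVec θ e))) i)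
          ∧
          ∀ QL : Fin n → ℝ,
            ((∀ i : Fin n,
                QL i = -(∑ b : Fin n ⊕ Fin m,
                  V (Sum.inl i) * V b * B (Sum.inl i) b * Real.cos (θ (Sum.inl i) - θ b)))
              ↔ QL = fun i =>
                  -4 * ((Matrix.diagonal v * Smat B VG).mulVec (v - fun _ => 1)) i
                  + ((absAL src tgt * Dmat B VG src tgt * Matrix.diagonal (hvec src tgt v)).mulVec
                      (fun e => 1 - Real.cos ((incA src tgt)ᵀ.mulVec θ e))) i)) := by
  intro θ v _ V hV
  subst hV
  have hB : IsUnit (BLL B) := by simpa using hBLL.isUnit.neg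
  have hrow := reactive_injection_load_eq B VG hsym hne huniq hBzero hB θ v
  exact ⟨hrow, fun QL => ⟨fun h => funext fun i => (h i).trans (hrow i),
    fun h i => by rw [h]; exact (hrow i).symm⟩⟩

/-- Reactive power reformulation (Lemma 2 / Step 2 of the paper): for any angles θ
and any positive scaled voltages v, with V_L = diag(V_L*) v, the reactive power
injection at each load bus equals
−4(diag(v) S (v−1))_i + (|A|_L D diag(h(v)) (1−cos(Aᵀθ)))_i; consequently (θ,V_L)
solves the reactive power flow equations at all load buses iff
Q_L = −4 diag(v) S (v−1) + |A|_L D diag(h(v)) (1−cos(Aᵀθ)). -/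
theorem stmt13 {n m E : ℕ} (hn : 0 < n) (hm : 0 < m)
    (B : Matrix (Fin n ⊕ Fin m) (Fin n ⊕ Fin m) ℝ)
    (VG : Fin m → ℝ)
    (src tgt : Fin E → Fin n ⊕ Fin m)
    (hsym : Bᵀ = B)
    (hne : ∀ e : Fin E, src e ≠ tgt e)
    (huniq : ∀ e f : Fin E,
      ((src e = src f ∧ tgt e = tgt f) ∨ (src e = tgt f ∧ tgt e = src f)) → e = f)
    (horient : ∀ (e : Fin E) (i : Fin n) (j : Fin m),
      ¬(src e = Sum.inl i ∧ tgt e = Sum.inr j))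
    (hBpos : ∀ a b : Fin n ⊕ Fin m, busJoined src tgt a b → 0 < B a b)
    (hBzero : ∀ a b : Fin n ⊕ Fin m, a ≠ b → ¬ busJoined src tgt a b → B a b = 0)
    (hBLL : (-(BLL B)).PosDef)
    (hVG : ∀ j, 0 < VG j) :
    ∀ (θ : Fin n ⊕ Fin m → ℝ) (v : Fin n → ℝ), (∀ i, 0 < v i) →
      ∀ V : Fin n ⊕ Fin m → ℝ,
        V = Sum.elim (fun k => VLstar B VG k * v k) VG →
        ((∀ i : Fin n,
            -(∑ b : Fin n ⊕ Fin m,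
                V (Sum.inl i) * V b * B (Sum.inl i) b * Real.cos (θ (Sum.inl i) - θ b))
              = -4 * ((Matrix.diagonal v * Smat B VG).mulVec (v - fun _ => 1)) i
                + ((absAL src tgt * Dmat B VG src tgt * Matrix.diagonal (hvec src tgt v)).mulVec
                    (fun e => 1 - Real.cos ((incA src tgt)ᵀ.mulVec θ e))) i)
          ∧
          ∀ QL : Fin n → ℝ,
            ((∀ i : Fin n,
                QL i = -(∑ b : Fin n ⊕ Fin m,
                  V (Sum.inl i) * V b * B (Sum.inl i) b * Real.cos (θ (Sum.inl i) - θ b)))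
              ↔ QL = fun i =>
                  -4 * ((Matrix.diagonal v * Smat B VG).mulVec (v - fun _ => 1)) i
                  + ((absAL src tgt * Dmat B VG src tgt * Matrix.diagonal (hvec src tgt v)).mulVec
                      (fun e => 1 - Real.cos ((incA src tgt)ᵀ.mulVec θ e))) i)) :=
  stmt13_general B VG src tgt hsym hne huniq hBzero hBLL
end

section
/- For every v ∈ ℝⁿ with strictly positive entries, the fixed-point power flow map satisfies f(v) = 1_n − ¼ S⁻¹ diag(Q_L) diag(v)⁻¹ 1_n + ¼ S⁻¹ |A|_L^{gℓ} D_{gℓ} u_{gℓ}(v) + ¼ S⁻¹ A_L^{ℓℓ}(+) diag(A_L^{ℓℓ}(−)ᵀ v) D_{ℓℓ} u_{ℓℓ}(v) + ¼ S⁻¹ A_L^{ℓℓ}(−) diag(A_L^{ℓℓ}(+)ᵀ v) D_{ℓℓ} u_{ℓℓ}(v), where u_{ℓℓ}(v) and u_{gℓ}(v) denote the subvectors of u(v) indexed by the load–load and generator–load edges, and D_{ℓℓ}, D_{gℓ} the corresponding diagonal blocks of D. -/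
open Matrix BigOperators

noncomputable section

/-- The load–load branches. -/
abbrev Ell {n m E : ℕ} (src tgt : Fin E → Fin n ⊕ Fin m) : Type :=
  {e : Fin E // (src e).isLeft ∧ (tgt e).isLeft}

/-- The generator–load branches (oriented from the generator to the load). -/
abbrev Egl {n m E : ℕ} (src tgt : Fin E → Fin n ⊕ Fin m) : Type :=
  {e : Fin E // (src e).isRight ∧ (tgt e).isLeft}

/-- The load–load diagonal block D_ℓℓ of the branch stiffness matrix. -/
def Dll {n m E : ℕ} (B : Matrix (Fin n ⊕ Fin m) (Fin n ⊕ Fin m) ℝ)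
    (VG : Fin m → ℝ) (src tgt : Fin E → Fin n ⊕ Fin m) :
    Matrix (Ell src tgt) (Ell src tgt) ℝ :=
  (Dmat B VG src tgt).submatrix Subtype.val Subtype.val

/-- The generator–load diagonal block D_gℓ of the branch stiffness matrix. -/
def Dgl {n m E : ℕ} (B : Matrix (Fin n ⊕ Fin m) (Fin n ⊕ Fin m) ℝ)
    (VG : Fin m → ℝ) (src tgt : Fin E → Fin n ⊕ Fin m) :
    Matrix (Egl src tgt) (Egl src tgt) ℝ :=
  (Dmat B VG src tgt).submatrix Subtype.val Subtype.val

/-- The positive part A_L^{ℓℓ}(+) of the load-rows block of the incidence matrix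
restricted to load–load branches. -/
def Apl {n m E : ℕ} (src tgt : Fin E → Fin n ⊕ Fin m) :
    Matrix (Fin n) (Ell src tgt) ℝ :=
  Matrix.of fun i e => if src e.1 = Sum.inl i then 1 else 0

/-- The negative part A_L^{ℓℓ}(−) of the load-rows block of the incidence matrix
restricted to load–load branches. -/
def Amin {n m E : ℕ} (src tgt : Fin E → Fin n ⊕ Fin m) :
    Matrix (Fin n) (Ell src tgt) ℝ :=
  Matrix.of fun i e => if tgt e.1 = Sum.inl i then 1 else 0

/-- The unsigned load-rows block |A|_L^{gℓ} of the incidence matrix restricted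
to generator–load branches. -/
def absAgl {n m E : ℕ} (src tgt : Fin E → Fin n ⊕ Fin m) :
    Matrix (Fin n) (Egl src tgt) ℝ :=
  Matrix.of fun i e => |incA src tgt (Sum.inl i) e.1|

/-- The subvector u_ℓℓ(v) of u(v) indexed by load–load branches. -/
def ull {n m E : ℕ} (B : Matrix (Fin n ⊕ Fin m) (Fin n ⊕ Fin m) ℝ)
    (VG : Fin m → ℝ) (src tgt : Fin E → Fin n ⊕ Fin m)
    (P : Fin n ⊕ Fin m → ℝ) (v : Fin n → ℝ) : Ell src tgt → ℝ :=
  fun e => uvec B VG src tgt P v e.1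

/-- The subvector u_gℓ(v) of u(v) indexed by generator–load branches. -/
def ugl {n m E : ℕ} (B : Matrix (Fin n ⊕ Fin m) (Fin n ⊕ Fin m) ℝ)
    (VG : Fin m → ℝ) (src tgt : Fin E → Fin n ⊕ Fin m)
    (P : Fin n ⊕ Fin m → ℝ) (v : Fin n → ℝ) : Egl src tgt → ℝ :=
  fun e => uvec B VG src tgt P v e.1

end

/-!
The identity holds entrywise, edge by edge. For a load `i` and a branch `e` at `i`, the factor
`v_i⁻¹ h(v)_e` of `diag(v)⁻¹ |A|_L D diag(h(v))` equals `1` on a generator–load branch (its load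
end is its target, so `h(v)_e = v_i`) and, on a load–load branch, the voltage at the other end of
`e`, which is exactly what `A_L^{ℓℓ}(±) diag(A_L^{ℓℓ}(∓)ᵀ v)` picks out. Generator–generator branches
have no entries in the load rows.
-/

lemma Matrix.inv_diagonal_of_ne_zero {ι K : Type*} [Fintype ι] [DecidableEq ι] [Field K]
    {v : ι → K} (hv : ∀ i, v i ≠ 0) :
    (diagonal v)⁻¹ = diagonal fun i => (v i)⁻¹ :=
  inv_eq_left_inv (by simp [diagonal_mul_diagonal, hv])

lemma Fintype.sum_subtype_eq_sum_dite {α M : Type*} [Fintype α] [AddCommMonoid M]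
    {p : α → Prop} [DecidablePred p] (f : {x // p x} → M) :
    ∑ a, f a = ∑ a, if h : p a then f ⟨a, h⟩ else 0 := by
  calc ∑ a, f a = ∑ a : {x // p x}, if h : p a.1 then f ⟨a, h⟩ else 0 :=
        Finset.sum_congr rfl fun a _ => by rw [dif_pos a.2]
    _ = ∑ a ∈ Finset.univ.filter p, if h : p a then f ⟨a, h⟩ else 0 :=
      (Finset.sum_subtype _ Finset.mem_filter_univ fun a => if h : p a then f ⟨a, h⟩ else 0).symm
    _ = _ := by
      rw [Finset.sum_filter]
      exact Finset.sum_congr rfl fun a _ => by split_ifs <;> rfl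

section Network

variable {n m E : ℕ} {src tgt : Fin E → Fin n ⊕ Fin m} {v : Fin n → ℝ}

lemma Apl_transpose_mulVec : (Apl src tgt)ᵀ *ᵥ v = fun e => Sum.elim v 0 (src e.1) := by
  ext e
  rcases h : src e.1 <;> simp [mulVec, dotProduct, Apl, h]

lemma Amin_transpose_mulVec : (Amin src tgt)ᵀ *ᵥ v = fun e => Sum.elim v 0 (tgt e.1) := by
  ext e
  rcases h : tgt e.1 <;> simp [mulVec, dotProduct, Amin, h]

lemma inv_mul_absAL_mul_hvec_eq {e : Fin E} {i : Fin n} (hne : src e ≠ tgt e)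
    (horient : ∀ j k, ¬(src e = Sum.inl j ∧ tgt e = Sum.inr k)) (hv : v i ≠ 0) :
    (v i)⁻¹ * absAL src tgt i e * hvec src tgt v e =
      (if (src e).isRight ∧ (tgt e).isLeft then absAL src tgt i e else 0)
      + (if (src e).isLeft ∧ (tgt e).isLeft then
          (if src e = Sum.inl i then Sum.elim v 0 (tgt e) else 0) else 0)
      + (if (src e).isLeft ∧ (tgt e).isLeft then
          (if tgt e = Sum.inl i then Sum.elim v 0 (src e) else 0) else 0) := by
  rcases hs : src e with j | g <;> rcases ht : tgt e with k | g'
  all_goals simp only [hs, ht] at hne horient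
  case inl.inl =>
    simp only [absAL, incA, hvec, hs, ht, of_apply, Sum.inl.injEq]
    split_ifs <;> subst_vars <;> simp_all
    field_simp
  case inl.inr => exact absurd ⟨rfl, rfl⟩ (horient j g')
  case inr.inl =>
    simp only [absAL, incA, hvec, hs, ht, of_apply, Sum.inl.injEq]
    split_ifs <;> subst_vars <;> simp_all
  case inr.inr => simp [absAL, incA, hs, ht]

variable (B : Matrix (Fin n ⊕ Fin m) (Fin n ⊕ Fin m) ℝ) (VG : Fin m → ℝ)

lemma inv_diagonal_mul_absAL_mulVec_eq_blocks (hne : ∀ e, src e ≠ tgt e)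
    (horient : ∀ e j k, ¬(src e = Sum.inl j ∧ tgt e = Sum.inr k)) (hv : ∀ i, v i ≠ 0)
    (w : Fin E → ℝ) :
    ((diagonal v)⁻¹ * absAL src tgt * Dmat B VG src tgt * diagonal (hvec src tgt v)) *ᵥ w
      = (absAgl src tgt * Dgl B VG src tgt) *ᵥ (fun e => w e.1)
        + (Apl src tgt * diagonal ((Amin src tgt)ᵀ *ᵥ v) * Dll B VG src tgt) *ᵥ (fun e => w e.1)
        + (Amin src tgt * diagonal ((Apl src tgt)ᵀ *ᵥ v) * Dll B VG src tgt) *ᵥ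
            (fun e => w e.1) := by
  ext i
  rw [Matrix.inv_diagonal_of_ne_zero hv, Apl_transpose_mulVec, Amin_transpose_mulVec]
  simp only [Pi.add_apply, mulVec, dotProduct, Fintype.sum_subtype_eq_sum_dite, Dll, Dgl, Dmat,
    submatrix_diagonal _ _ Subtype.val_injective, mul_diagonal, diagonal_mul, Function.comp_apply,
    absAgl, Apl, Amin, of_apply, dite_eq_ite]
  rw [← Finset.sum_add_distrib, ← Finset.sum_add_distrib]
  refine Finset.sum_congr rfl fun e _ => ?_
  calc _ = (v i)⁻¹ * absAL src tgt i e * hvec src tgt v e * (Dmat B VG src tgt e e * w e) := by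
        simp only [Dmat, diagonal_apply_eq]; ring
    _ = _ := by
      rw [inv_mul_absAL_mul_hvec_eq (hne e) (horient e) (hv i)]
      split_ifs <;> simp [absAL, Dmat] <;> ring

end Network

theorem stmt16_general {n m E : ℕ}
    (B : Matrix (Fin n ⊕ Fin m) (Fin n ⊕ Fin m) ℝ)
    (VG : Fin m → ℝ)
    (src tgt : Fin E → Fin n ⊕ Fin m)
    (hne : ∀ e : Fin E, src e ≠ tgt e)
    (horient : ∀ (e : Fin E) (i : Fin n) (j : Fin m),
      ¬(src e = Sum.inl i ∧ tgt e = Sum.inr j))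
    (P : Fin n ⊕ Fin m → ℝ)
    (QL : Fin n → ℝ) :
    ∀ v : Fin n → ℝ, (∀ i, 0 < v i) →
      fppf B VG src tgt P QL v
        = (fun _ => (1 : ℝ))
          - (4⁻¹ : ℝ) •
            (((Smat B VG)⁻¹ * Matrix.diagonal QL * (Matrix.diagonal v)⁻¹).mulVec
              fun _ => (1 : ℝ))
          + (4⁻¹ : ℝ) •
            (((Smat B VG)⁻¹ * absAgl src tgt * Dgl B VG src tgt).mulVec
              (ugl B VG src tgt P v))
          + (4⁻¹ : ℝ) •
            (((Smat B VG)⁻¹ * Apl src tgt *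
                Matrix.diagonal ((Amin src tgt)ᵀ.mulVec v) * Dll B VG src tgt).mulVec
              (ull B VG src tgt P v))
          + (4⁻¹ : ℝ) •
            (((Smat B VG)⁻¹ * Amin src tgt *
                Matrix.diagonal ((Apl src tgt)ᵀ.mulVec v) * Dll B VG src tgt).mulVec
              (ull B VG src tgt P v)) := by
  intro v hv
  have hsplit := inv_diagonal_mul_absAL_mulVec_eq_blocks B VG hne horient
    (fun i => (hv i).ne') (uvec B VG src tgt P v)
  simp only [fppf, Matrix.mul_assoc, ← Matrix.mulVec_mulVec] at hsplit ⊢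
  rw [hsplit, mulVec_add, mulVec_add, smul_add, smul_add]
  abel

/-- Alternative form of the fixed-point power flow map (Corollary 3 of the paper):
f(v) = 1 − ¼S⁻¹ diag(Q_L) diag(v)⁻¹ 1 + ¼S⁻¹ |A|_L^{gℓ} D_{gℓ} u_{gℓ}(v)
       + ¼S⁻¹ A_L^{ℓℓ}(+) diag(A_L^{ℓℓ}(−)ᵀ v) D_{ℓℓ} u_{ℓℓ}(v)
       + ¼S⁻¹ A_L^{ℓℓ}(−) diag(A_L^{ℓℓ}(+)ᵀ v) D_{ℓℓ} u_{ℓℓ}(v). -/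
theorem stmt16 {n m E : ℕ} (hn : 0 < n) (hm : 0 < m)
    (B : Matrix (Fin n ⊕ Fin m) (Fin n ⊕ Fin m) ℝ)
    (VG : Fin m → ℝ)
    (src tgt : Fin E → Fin n ⊕ Fin m)
    (hsym : Bᵀ = B)
    (hne : ∀ e : Fin E, src e ≠ tgt e)
    (huniq : ∀ e f : Fin E,
      ((src e = src f ∧ tgt e = tgt f) ∨ (src e = tgt f ∧ tgt e = src f)) → e = f)
    (horient : ∀ (e : Fin E) (i : Fin n) (j : Fin m),
      ¬(src e = Sum.inl i ∧ tgt e = Sum.inr j))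
    (hBpos : ∀ a b : Fin n ⊕ Fin m, busJoined src tgt a b → 0 < B a b)
    (hBzero : ∀ a b : Fin n ⊕ Fin m, a ≠ b → ¬ busJoined src tgt a b → B a b = 0)
    (hBLL : (-(BLL B)).PosDef)
    (hVG : ∀ j, 0 < VG j)
    (hacyclic : ∀ p : Fin E → ℝ, (incA src tgt).mulVec p = 0 → p = 0)
    (hconn : ∀ x : Fin n ⊕ Fin m → ℝ,
      (incA src tgt)ᵀ.mulVec x = 0 ↔ ∃ c : ℝ, x = fun _ => c)
    (P : Fin n ⊕ Fin m → ℝ)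
    (hP : ∑ a, P a = 0)
    (QL : Fin n → ℝ) :
    ∀ v : Fin n → ℝ, (∀ i, 0 < v i) →
      fppf B VG src tgt P QL v
        = (fun _ => (1 : ℝ))
          - (4⁻¹ : ℝ) •
            (((Smat B VG)⁻¹ * Matrix.diagonal QL * (Matrix.diagonal v)⁻¹).mulVec
              fun _ => (1 : ℝ))
          + (4⁻¹ : ℝ) •
            (((Smat B VG)⁻¹ * absAgl src tgt * Dgl B VG src tgt).mulVec
              (ugl B VG src tgt P v))
          + (4⁻¹ : ℝ) •
            (((Smat B VG)⁻¹ * Apl src tgt *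
                Matrix.diagonal ((Amin src tgt)ᵀ.mulVec v) * Dll B VG src tgt).mulVec
              (ull B VG src tgt P v))
          + (4⁻¹ : ℝ) •
            (((Smat B VG)⁻¹ * Amin src tgt *
                Matrix.diagonal ((Apl src tgt)ᵀ.mulVec v) * Dll B VG src tgt).mulVec
              (ull B VG src tgt P v)) :=
  stmt16_general B VG src tgt hne horient P QL
end
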